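/- Let p ∈ (1, ∞) and f ∈ L^p(∂T, ν). Then lim_{j → −∞} ∫_{∂T} |𝒫f(ω(j)) − f(ω)|^p dν(ω) = 0. -/

import Mathlib

open MeasureTheory
open scoped ENNReal NNReal

/-- The punctured boundary `∂T` of the tree: maps `ω : ℤ → T` with `lev (ω j) = j`
and `par (ω j) = ω (j+1)`. -/
def PBoundary {T : Type*} (par : T → T) (lev : T → ℤ) : Type _ :=
  {ω : ℤ → T // (∀ j : ℤ, lev (ω j) = j) ∧ ∀ j : ℤ, par (ω j) = ω (j + 1)}

/-- The boundary sector `∂T_x`. -/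
def sector {T : Type*} (par : T → T) (lev : T → ℤ) (x : T) : Set (PBoundary par lev) :=
  {ω : PBoundary par lev | ω.1 (lev x) = x}

/-- The σ-algebra on `∂T` generated by the sectors. -/
instance {T : Type*} (par : T → T) (lev : T → ℤ) : MeasurableSpace (PBoundary par lev) :=
  MeasurableSpace.generateFrom (Set.range (sector par lev))

/-- The flow measure `m_ν x = ν (∂T_x)` (as a real number). -/
noncomputable def mnu {T : Type*} (par : T → T) (lev : T → ℤ)
    (ν : Measure (PBoundary par lev)) (x : T) : ℝ :=
  (ν (sector par lev x)).toReal

/-- The Poisson integral operator `𝒫 g (x) = m_ν(x)⁻¹ ∫_{∂T_x} g dν`. -/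
noncomputable def poisson {T : Type*} (par : T → T) (lev : T → ℤ)
    (ν : Measure (PBoundary par lev)) (g : PBoundary par lev → ℝ) (x : T) : ℝ :=
  (mnu par lev ν x)⁻¹ * ∫ ω in sector par lev x, g ω ∂ν

/-!
`ω ↦ 𝒫f(ω(j))` averages `f` over the level-`j` sector containing `ω`: it is the conditional
expectation of `f` given the partition of `∂T` into level-`j` sectors. Since the normalized
restriction `ν[|∂T_x]` is a probability measure, Jensen's inequality on each sector makes this
operator an `L^p` contraction, and it fixes every function of `ω(J)` alone as soon as `j ≤ J`.
Such cylinder functions are dense in `L^p`: cylinder sets form a ring generating the σ-algebra,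
and `∂T` is exhausted by the increasing finite-measure sectors `∂T_{ω₀(n)}`. Approximating `f`
within `ε/2` by a cylinder function `g` gives `‖𝒫f(ω(j)) - f‖_p ≤ 2‖f - g‖_p ≤ ε` for `j ≪ 0`.
-/

open Filter Topology ProbabilityTheory Set
open scoped symmDiff

section

variable {T : Type*} {par : T → T} {lev : T → ℤ}

namespace PBoundary

lemma lev_apply (ω : PBoundary par lev) (j : ℤ) : lev (ω.1 j) = j := ω.2.1 j

lemma apply_add_nat (ω : PBoundary par lev) (j : ℤ) (n : ℕ) :
    ω.1 (j + n) = par^[n] (ω.1 j) := by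
  induction n with
  | zero => simp
  | succ n ih =>
    rw [Function.iterate_succ_apply', ← ih, ω.2.2, Nat.cast_succ, add_assoc]

lemma apply_eq_iterate (ω : PBoundary par lev) {j J : ℤ} (h : j ≤ J) :
    ω.1 J = par^[(J - j).toNat] (ω.1 j) := by
  have hJ : J = j + ((J - j).toNat : ℤ) := by omega
  rw [← apply_add_nat, ← hJ]

lemma apply_eq_of_le {ω ω' : PBoundary par lev} {j J : ℤ} (h : j ≤ J) (hj : ω.1 j = ω'.1 j) :
    ω.1 J = ω'.1 J := by
  rw [apply_eq_iterate ω h, apply_eq_iterate ω' h, hj]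

end PBoundary

lemma mem_sector_apply {ω ω' : PBoundary par lev} {j : ℤ} :
    ω ∈ sector par lev (ω'.1 j) ↔ ω.1 j = ω'.1 j := by
  change ω.1 (lev (ω'.1 j)) = _ ↔ _
  rw [ω'.lev_apply]

lemma measurableSet_sector (x : T) : MeasurableSet (sector par lev x) :=
  MeasurableSpace.measurableSet_generateFrom ⟨x, rfl⟩

lemma countable_of_finite_fibers_of_iterate_eq {f : T → T}
    (hfin : ∀ x : T, {y : T | f y = x}.Finite) (x₀ : T)
    (hconn : ∀ x : T, ∃ n m : ℕ, f^[n] x = f^[m] x₀) : Countable T := by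
  have hfib : ∀ n x, (f^[n] ⁻¹' {x}).Finite := by
    intro n
    induction n with
    | zero => simp
    | succ n ih =>
      intro x
      rw [Function.iterate_succ, Set.preimage_comp]
      exact (ih x).preimage' fun y _ => hfin y
  rw [← Set.countable_univ_iff]
  refine (Set.countable_iUnion fun n => Set.countable_iUnion fun m =>
    (hfib n (f^[m] x₀)).countable).mono fun x _ => ?_
  obtain ⟨n, m, h⟩ := hconn x
  exact Set.mem_iUnion₂.2 ⟨n, m, h⟩

lemma monotone_sector_apply (ω₀ : PBoundary par lev) :
    Monotone fun n : ℕ => sector par lev (ω₀.1 n) := by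
  intro n m hnm ω hω
  exact mem_sector_apply.2 <|
    PBoundary.apply_eq_of_le (by exact_mod_cast hnm) (mem_sector_apply.1 hω)

lemma iUnion_sector_apply (hconn : ∀ x y : T, ∃ n m : ℕ, par^[n] x = par^[m] y)
    (ω₀ : PBoundary par lev) : ⋃ n : ℕ, sector par lev (ω₀.1 n) = univ := by
  refine eq_univ_of_forall fun ω => mem_iUnion.2 ?_
  obtain ⟨n, m, h⟩ := hconn (ω.1 0) (ω₀.1 0)
  have hnm : ω.1 n = ω₀.1 m := by
    simpa only [← PBoundary.apply_add_nat, zero_add] using h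
  have hlev : (n : ℤ) = m := by rw [← ω.lev_apply n, hnm, ω₀.lev_apply]
  refine ⟨n, mem_sector_apply.2 ?_⟩
  rw [hnm, hlev]

def cylinderSets (par : T → T) (lev : T → ℤ) : Set (Set (PBoundary par lev)) :=
  {s | ∃ (J : ℤ) (B : Set T), s = (fun ω => ω.1 J) ⁻¹' B}

lemma preimage_apply_eq_of_le {j J : ℤ} (h : j ≤ J) (B : Set T) :
    (fun ω : PBoundary par lev => ω.1 J) ⁻¹' B =
      (fun ω => ω.1 j) ⁻¹' (par^[(J - j).toNat] ⁻¹' B) := by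
  ext ω
  simp only [mem_preimage, ω.apply_eq_iterate h]

lemma isSetRing_cylinderSets : IsSetRing (cylinderSets par lev) where
  empty_mem := ⟨0, ∅, rfl⟩
  union_mem := by
    rintro _ _ ⟨J, B, rfl⟩ ⟨J', B', rfl⟩
    rw [preimage_apply_eq_of_le (min_le_left J J'), preimage_apply_eq_of_le (min_le_right J J') B',
      ← preimage_union]
    exact ⟨_, _, rfl⟩
  sdiff_mem := by
    rintro _ _ ⟨J, B, rfl⟩ ⟨J', B', rfl⟩
    rw [preimage_apply_eq_of_le (min_le_left J J'), preimage_apply_eq_of_le (min_le_right J J') B',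
      ← preimage_sdiff]
    exact ⟨_, _, rfl⟩

lemma measurableSet_preimage_apply [Countable T] (j : ℤ) (B : Set T) :
    MeasurableSet ((fun ω : PBoundary par lev => ω.1 j) ⁻¹' B) := by
  rw [← biUnion_preimage_singleton]
  refine MeasurableSet.biUnion (to_countable B) fun x _ => ?_
  obtain rfl | hx := eq_or_ne j (lev x)
  · exact measurableSet_sector x
  · convert MeasurableSet.empty
    refine eq_empty_of_forall_notMem fun ω (hω : ω.1 j = x) => hx ?_
    rw [← hω, ω.lev_apply]

lemma measurable_comp_apply [Countable T] {β : Type*} [MeasurableSpace β] (F : T → β) (j : ℤ) :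
    Measurable fun ω : PBoundary par lev => F (ω.1 j) :=
  fun s _ => measurableSet_preimage_apply (par := par) j (F ⁻¹' s)

lemma sector_mem_cylinderSets (x : T) : sector par lev x ∈ cylinderSets par lev :=
  ⟨lev x, {x}, rfl⟩

lemma generateFrom_cylinderSets [Countable T] :
    MeasurableSpace.generateFrom (cylinderSets par lev) =
      (inferInstance : MeasurableSpace (PBoundary par lev)) :=
  le_antisymm
    (MeasurableSpace.generateFrom_le <| by
      rintro _ ⟨J, B, rfl⟩
      exact measurableSet_preimage_apply J B)
    (MeasurableSpace.generateFrom_le <| by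
      rintro _ ⟨x, rfl⟩
      exact MeasurableSpace.measurableSet_generateFrom (sector_mem_cylinderSets x))

lemma exists_measure_symmDiff_lt_of_generateFrom_isSetRing_of_iUnion {α : Type*}
    [mα : MeasurableSpace α] {μ : Measure α} {C : Set (Set α)} (hC : IsSetRing C)
    (h : mα = MeasurableSpace.generateFrom C) {U : ℕ → Set α} (hUC : ∀ n, U n ∈ C)
    (hUμ : ∀ n, μ (U n) ≠ ⊤) (hU_mono : Monotone U) (hU : ⋃ n, U n = univ)
    {s : Set α} (hs : MeasurableSet s) (hμs : μ s ≠ ⊤) {ε : ℝ≥0∞} (hε : 0 < ε) :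
    ∃ t ∈ C, μ t ≠ ⊤ ∧ μ (t ∆ s) < ε := by
  have hU_meas : ∀ n, MeasurableSet (U n) := fun n =>
    h ▸ MeasurableSpace.measurableSet_generateFrom (hUC n)
  have hlim : Tendsto (fun n => μ (s \ U n)) atTop (𝓝 0) := by
    have := tendsto_measure_iInter_atTop (μ := μ) (s := fun n => s \ U n)
      (fun n => (hs.diff (hU_meas n)).nullMeasurableSet)
      (fun n m hnm => sdiff_subset_sdiff_right (hU_mono hnm))
      ⟨0, measure_ne_top_of_subset sdiff_subset hμs⟩
    rwa [← sdiff_iUnion, hU, sdiff_univ, measure_empty] at this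
  -- The finite-measure approximation applies to `μ.restrict (U K)`, and `U K` misses less
  -- than `ε / 2` of `s`.
  obtain ⟨K, hK⟩ := (hlim.eventually_lt_const (ENNReal.half_pos hε.ne')).exists
  have : IsFiniteMeasure (μ.restrict (U K)) := isFiniteMeasure_restrict.2 (hUμ K)
  have hUK_cover : μ.restrict (U K) (⋃₀ {U K})ᶜ = 0 := by
    rw [sUnion_singleton, Measure.restrict_apply' (hU_meas K), compl_inter_self, measure_empty]
  obtain ⟨t, htC, ht⟩ := exists_measure_symmDiff_lt_of_generateFrom_isSetRing
    hC ⟨{U K}, countable_singleton _, by simpa using hUC K, hUK_cover⟩ h hs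
    (ENNReal.half_pos hε.ne')
  rw [Measure.restrict_apply' (hU_meas K)] at ht
  refine ⟨t ∩ U K, hC.inter_mem htC (hUC K),
    measure_ne_top_of_subset inter_subset_right (hUμ K), ?_⟩
  calc μ ((t ∩ U K) ∆ s) ≤ μ ((t ∆ s) ∩ U K ∪ s \ U K) := by
        refine measure_mono fun x hx => ?_
        simp only [mem_symmDiff, mem_inter_iff, mem_union, Set.mem_sdiff] at hx ⊢
        tauto
    _ ≤ μ ((t ∆ s) ∩ U K) + μ (s \ U K) := measure_union_le _ _
    _ < ε / 2 + ε / 2 := ENNReal.add_lt_add ht hK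
    _ = ε := ENNReal.add_halves ε

lemma eLpNorm_rpow_toReal_eq_lintegral {α E : Type*} [MeasurableSpace α] [NormedAddCommGroup E]
    {μ : Measure α} {p : ℝ≥0∞} (hp0 : p ≠ 0) (hp : p ≠ ⊤) (f : α → E) :
    eLpNorm f p μ ^ p.toReal = ∫⁻ x, ‖f x‖ₑ ^ p.toReal ∂μ := by
  rw [eLpNorm_eq_lintegral_rpow_enorm_toReal hp0 hp, ← ENNReal.rpow_mul,
    one_div_mul_cancel (ENNReal.toReal_pos hp0 hp).ne', ENNReal.rpow_one]

section Poisson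

variable {ν : Measure (PBoundary par lev)}

lemma poisson_eq_integral_cond (h : PBoundary par lev → ℝ) (x : T) :
    poisson par lev ν h x = ∫ ω, h ω ∂ν[|sector par lev x] := by
  rw [poisson, ProbabilityTheory.cond, integral_smul_measure, ENNReal.toReal_inv, smul_eq_mul, mnu]

lemma isProbabilityMeasure_cond_sector
    (hν : ∀ x : T, 0 < ν (sector par lev x) ∧ ν (sector par lev x) < ⊤) (x : T) :
    IsProbabilityMeasure ν[|sector par lev x] :=
  cond_isProbabilityMeasure_of_finite (hν x).1.ne' (hν x).2.ne

lemma poisson_comp_apply (hν : ∀ x : T, 0 < ν (sector par lev x) ∧ ν (sector par lev x) < ⊤)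
    (G : T → ℝ) {j J : ℤ} (hjJ : j ≤ J) (ω : PBoundary par lev) :
    poisson par lev ν (fun ω' => G (ω'.1 J)) (ω.1 j) = G (ω.1 J) := by
  have := isProbabilityMeasure_cond_sector hν (ω.1 j)
  rw [poisson_eq_integral_cond, integral_congr_ae (g := fun _ => G (ω.1 J)), integral_const,
    probReal_univ, one_smul]
  exact ae_cond_of_forall_mem (measurableSet_sector _) fun ω' hω' =>
    congrArg G (PBoundary.apply_eq_of_le hjJ (mem_sector_apply.1 hω'))

lemma poisson_sub (hν : ∀ x : T, 0 < ν (sector par lev x) ∧ ν (sector par lev x) < ⊤)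
    {p : ℝ≥0∞} (hp : 1 ≤ p) {f g : PBoundary par lev → ℝ} (hf : MemLp f p ν) (hg : MemLp g p ν)
    (x : T) : poisson par lev ν (f - g) x = poisson par lev ν f x - poisson par lev ν g x := by
  have := isProbabilityMeasure_cond_sector hν x
  have hint : ∀ {h : PBoundary par lev → ℝ}, MemLp h p ν → Integrable h ν[|sector par lev x] :=
    fun hh => MemLp.integrable hp <|
      (hh.restrict _).smul_measure (ENNReal.inv_ne_top.2 (hν x).1.ne')
  simp only [poisson_eq_integral_cond, Pi.sub_apply, integral_sub (hint hf) (hint hg)]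

lemma enorm_poisson_le_eLpNorm_cond
    (hν : ∀ x : T, 0 < ν (sector par lev x) ∧ ν (sector par lev x) < ⊤)
    {p : ℝ≥0∞} (hp : 1 ≤ p) {h : PBoundary par lev → ℝ} (hh : AEStronglyMeasurable h ν) (x : T) :
    ‖poisson par lev ν h x‖ₑ ≤ eLpNorm h p ν[|sector par lev x] := by
  have := isProbabilityMeasure_cond_sector hν x
  calc ‖poisson par lev ν h x‖ₑ ≤ ∫⁻ ω, ‖h ω‖ₑ ∂ν[|sector par lev x] := by
        rw [poisson_eq_integral_cond]
        exact enorm_integral_le_lintegral_enorm _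
    _ = eLpNorm h 1 ν[|sector par lev x] := eLpNorm_one_eq_lintegral_enorm.symm
    _ ≤ eLpNorm h p ν[|sector par lev x] :=
        eLpNorm_le_eLpNorm_of_exponent_le hp (hh.mono_ac cond_absolutelyContinuous)

lemma lintegral_eq_tsum_sector [Countable T] (j : ℤ) (F : PBoundary par lev → ℝ≥0∞) :
    ∫⁻ ω, F ω ∂ν = ∑' y : {y : T // lev y = j}, ∫⁻ ω in sector par lev y, F ω ∂ν := by
  have hU : ⋃ y : {y : T // lev y = j}, sector par lev y = univ :=
    eq_univ_of_forall fun ω => mem_iUnion.2 ⟨⟨ω.1 j, ω.lev_apply j⟩, mem_sector_apply.2 rfl⟩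
  have hdisj :
      Pairwise (Function.onFun Disjoint fun y : {y : T // lev y = j} => sector par lev y) := by
    rintro ⟨y, rfl⟩ ⟨z, hz⟩ hyz
    refine disjoint_left.2 fun ω (hωy : ω.1 (lev y) = y) (hωz : ω.1 (lev z) = z) => hyz ?_
    rw [Subtype.mk.injEq, ← hωy, ← hωz, hz]
  rw [← lintegral_iUnion (μ := ν) (fun y : {y : T // lev y = j} => measurableSet_sector y.1)
    hdisj F, hU, setLIntegral_univ]

lemma eLpNorm_poisson_comp_apply_le [Countable T]
    (hν : ∀ x : T, 0 < ν (sector par lev x) ∧ ν (sector par lev x) < ⊤)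
    {p : ℝ≥0∞} (hp1 : 1 ≤ p) (hp : p ≠ ⊤) {h : PBoundary par lev → ℝ}
    (hh : AEStronglyMeasurable h ν) (j : ℤ) :
    eLpNorm (fun ω => poisson par lev ν h (ω.1 j)) p ν ≤ eLpNorm h p ν := by
  have hp0 : p ≠ 0 := (zero_lt_one.trans_le hp1).ne'
  rw [← ENNReal.rpow_le_rpow_iff (ENNReal.toReal_pos hp0 hp),
    eLpNorm_rpow_toReal_eq_lintegral hp0 hp, eLpNorm_rpow_toReal_eq_lintegral hp0 hp,
    lintegral_eq_tsum_sector j, lintegral_eq_tsum_sector j]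
  refine ENNReal.tsum_le_tsum fun ⟨y, hy⟩ => ?_
  calc ∫⁻ ω in sector par lev y, ‖poisson par lev ν h (ω.1 j)‖ₑ ^ p.toReal ∂ν
      = ν (sector par lev y) * ‖poisson par lev ν h y‖ₑ ^ p.toReal := by
        rw [← mul_comm, ← setLIntegral_const]
        refine setLIntegral_congr_fun (measurableSet_sector y) fun ω (hω : ω.1 (lev y) = y) => ?_
        rw [← hy, hω]
    _ ≤ ν (sector par lev y) * eLpNorm h p ν[|sector par lev y] ^ p.toReal := by
        gcongr
        exact enorm_poisson_le_eLpNorm_cond hν hp1 hh y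
    _ = ∫⁻ ω in sector par lev y, ‖h ω‖ₑ ^ p.toReal ∂ν := by
        rw [eLpNorm_rpow_toReal_eq_lintegral hp0 hp, ProbabilityTheory.cond, lintegral_smul_measure,
          smul_eq_mul, ENNReal.mul_inv_cancel_left (hν y).1.ne' (hν y).2.ne]

lemma exists_cylinder_eLpNorm_sub_le [Countable T]
    (hconn : ∀ x y : T, ∃ n m : ℕ, par^[n] x = par^[m] y)
    (hν_fin : ∀ x : T, ν (sector par lev x) ≠ ⊤) (ω₀ : PBoundary par lev)
    {p : ℝ≥0∞} (hp0 : p ≠ 0) (hp : p ≠ ⊤) {f : PBoundary par lev → ℝ} (hf : MemLp f p ν)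
    {ε : ℝ≥0∞} (hε : ε ≠ 0) :
    ∃ g, eLpNorm (f - g) p ν ≤ ε ∧ MemLp g p ν ∧
      ∃ (J : ℤ) (G : T → ℝ), g = fun ω => G (ω.1 J) := by
  refine hf.induction_dense hp
    (fun g => MemLp g p ν ∧ ∃ (J : ℤ) (G : T → ℝ), g = fun ω => G (ω.1 J))
    ?_ ?_ (fun g hg => hg.1.1) hε
  · intro c s hs hνs δ hδ
    have hr : 0 < p.toReal := ENNReal.toReal_pos hp0 hp
    set η := (δ / ‖c‖ₑ) ^ p.toReal
    have hη : 0 < η := ENNReal.rpow_pos_of_nonneg (ENNReal.div_pos hδ enorm_ne_top) hr.le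
    obtain ⟨t, ⟨J, B, rfl⟩, htop, hts⟩ :=
      exists_measure_symmDiff_lt_of_generateFrom_isSetRing_of_iUnion isSetRing_cylinderSets
        generateFrom_cylinderSets.symm (fun n => sector_mem_cylinderSets _) (fun n => hν_fin _)
        (monotone_sector_apply ω₀) (iUnion_sector_apply hconn ω₀) hs hνs.ne hη
    set t := (fun ω : PBoundary par lev => ω.1 J) ⁻¹' B
    refine ⟨t.indicator fun _ => c, ?_,
      memLp_indicator_const p (measurableSet_preimage_apply J B) c (Or.inr htop), J,
      B.indicator fun _ => c, funext fun ω => indicator_comp_right (g := fun _ => c) _⟩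
    calc eLpNorm (t.indicator (fun _ => c) - s.indicator fun _ => c) p ν
        = eLpNorm ((t ∆ s).indicator fun _ => c) p ν := eLpNorm_indicator_sub_indicator _ _ _
      _ ≤ ‖c‖ₑ * ν (t ∆ s) ^ (1 / p.toReal) := eLpNorm_indicator_const_le _ _
      _ ≤ ‖c‖ₑ * η ^ (1 / p.toReal) := by gcongr
      _ ≤ δ := by
          rw [← ENNReal.rpow_mul, mul_one_div_cancel hr.ne', ENNReal.rpow_one]
          exact ENNReal.mul_div_le
  · rintro _ _ ⟨hg₁, J₁, G₁, rfl⟩ ⟨hg₂, J₂, G₂, rfl⟩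
    refine ⟨hg₁.add hg₂, min J₁ J₂, fun x => G₁ (par^[(J₁ - min J₁ J₂).toNat] x) +
      G₂ (par^[(J₂ - min J₁ J₂).toNat] x), ?_⟩
    ext ω
    simp only [Pi.add_apply, ← ω.apply_eq_iterate (min_le_left _ _),
      ← ω.apply_eq_iterate (min_le_right _ _)]

end Poisson

theorem tendsto_eLpNorm_poisson_comp_apply_sub [Nonempty T]
    (hfin : ∀ x : T, {y : T | par y = x}.Finite)
    (hconn : ∀ x y : T, ∃ n m : ℕ, par^[n] x = par^[m] y) {ν : Measure (PBoundary par lev)}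
    (hν : ∀ x : T, 0 < ν (sector par lev x) ∧ ν (sector par lev x) < ⊤)
    {p : ℝ≥0∞} (hp1 : 1 ≤ p) (hp : p ≠ ⊤) {f : PBoundary par lev → ℝ} (hf : MemLp f p ν) :
    Tendsto (fun j : ℤ => eLpNorm (fun ω => poisson par lev ν f (ω.1 j) - f ω) p ν)
      atBot (𝓝 0) := by
  obtain ⟨x₀⟩ := ‹Nonempty T›
  obtain ⟨ω₀, -⟩ := nonempty_of_measure_ne_zero (hν x₀).1.ne'
  have : Countable T := countable_of_finite_fibers_of_iterate_eq hfin x₀ fun x => hconn x x₀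
  rw [ENNReal.tendsto_nhds_zero]
  intro ε hε
  obtain ⟨g, hfg, hg, J, G, rfl⟩ := exists_cylinder_eLpNorm_sub_le hconn (fun x => (hν x).2.ne) ω₀
    (zero_lt_one.trans_le hp1).ne' hp hf (ENNReal.half_pos hε.ne').ne'
  filter_upwards [eventually_le_atBot J] with j hj
  have hsplit : (fun ω => poisson par lev ν f (ω.1 j) - f ω) =
      (fun ω => poisson par lev ν (f - fun ω' => G (ω'.1 J)) (ω.1 j)) +
        ((fun ω' => G (ω'.1 J)) - f) := by
    ext ω
    simp only [Pi.add_apply, Pi.sub_apply, poisson_sub hν hp1 hf hg, poisson_comp_apply hν G hj]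
    ring
  calc eLpNorm (fun ω => poisson par lev ν f (ω.1 j) - f ω) p ν
      ≤ eLpNorm (fun ω => poisson par lev ν (f - fun ω' => G (ω'.1 J)) (ω.1 j)) p ν +
          eLpNorm ((fun ω' => G (ω'.1 J)) - f) p ν := by
        rw [hsplit]
        exact eLpNorm_add_le (measurable_comp_apply _ j).aestronglyMeasurable
          (hg.sub hf).aestronglyMeasurable hp1
    _ ≤ ε / 2 + ε / 2 := by
        gcongr
        · exact (eLpNorm_poisson_comp_apply_le hν hp1 hp
            (hf.sub hg).aestronglyMeasurable j).trans hfg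
        · rwa [eLpNorm_sub_comm]
    _ = ε := ENNReal.add_halves ε

end

theorem stmt9_general {T : Type*} [Nonempty T] (par : T → T) (lev : T → ℤ)
    (hfin : ∀ x : T, {y : T | par y = x}.Finite)
    (hconn : ∀ x y : T, ∃ n m : ℕ, par^[n] x = par^[m] y)
    (ν : Measure (PBoundary par lev))
    (hν : ∀ x : T, 0 < ν (sector par lev x) ∧ ν (sector par lev x) < ⊤)
    (p : ℝ) (hp : 1 < p)
    (f : PBoundary par lev → ℝ) (hf : MemLp f (ENNReal.ofReal p) ν) :
    Filter.Tendsto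
      (fun j : ℤ => ∫⁻ ω, ENNReal.ofReal (|poisson par lev ν f (ω.1 j) - f ω| ^ p) ∂ν)
      Filter.atBot (nhds 0) := by
  have hp0 : 0 < p := zero_lt_one.trans hp
  have hlim := tendsto_eLpNorm_poisson_comp_apply_sub hfin hconn hν
    (ENNReal.one_le_ofReal.2 hp.le) ENNReal.ofReal_ne_top hf
  have hpow := ((ENNReal.continuous_rpow_const (y := p)).tendsto 0).comp hlim
  rw [ENNReal.zero_rpow_of_pos hp0] at hpow
  refine hpow.congr fun j => ?_
  have h := eLpNorm_rpow_toReal_eq_lintegral (μ := ν) (ENNReal.ofReal_pos.2 hp0).ne'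
    ENNReal.ofReal_ne_top fun ω => poisson par lev ν f (ω.1 j) - f ω
  rw [ENNReal.toReal_ofReal hp0.le] at h
  rw [Function.comp_apply, h]
  simp only [Real.enorm_eq_ofReal_abs, ENNReal.ofReal_rpow_of_nonneg (abs_nonneg _) hp0.le]

/-- For `p ∈ (1,∞)` and `f ∈ L^p(∂T,ν)`,
`lim_{j → −∞} ∫_{∂T} |𝒫f(ω(j)) − f(ω)|^p dν(ω) = 0`. -/
theorem stmt9 {T : Type*} [Nonempty T] (par : T → T) (lev : T → ℤ)
    (hlev : ∀ x : T, lev (par x) = lev x + 1)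
    (hfin : ∀ x : T, {y : T | par y = x}.Finite)
    (hsucc : ∀ x : T, ∃ y : T, par y = x)
    (hconn : ∀ x y : T, ∃ n m : ℕ, par^[n] x = par^[m] y)
    (ν : Measure (PBoundary par lev))
    (hν : ∀ x : T, 0 < ν (sector par lev x) ∧ ν (sector par lev x) < ⊤)
    (p : ℝ) (hp : 1 < p)
    (f : PBoundary par lev → ℝ) (hf : MemLp f (ENNReal.ofReal p) ν) :
    Filter.Tendsto
      (fun j : ℤ => ∫⁻ ω, ENNReal.ofReal (|poisson par lev ν f (ω.1 j) - f ω| ^ p) ∂ν)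
      Filter.atBot (nhds 0) :=
  stmt9_general par lev hfin hconn ν hν p hp f hf
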